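/- (Extended pose error propagation.) Fix Δt ∈ ℝ and let F : ℝ⁹ → ℝ⁹ be the linear map (ω, v, x) ↦ (ω, v, x + Δt·v). Let T̄ ∈ SE₂(3), ξ ∈ ℝ⁹, Υ ∈ SE₂(3), let Γ be any invertible 5×5 real matrix, and let Φ = Φ_Δt. Then Γ Φ(T̄ exp_m(ξ^∧)) Υ = (Γ Φ(T̄) Υ) exp_m((Ad_{Υ⁻¹} F ξ)^∧); i.e., if T̄_{k+1} := Γ Φ(T̄) Υ denotes the noise-free propagation of T̄, the exponential error coordinates propagate linearly as ξ ↦ Ad_{Υ⁻¹} F ξ. -/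

import Mathlib

open Matrix

noncomputable section

abbrev M3 := Matrix (Fin 3) (Fin 3) ℝ
abbrev M5 := Matrix (Fin 5) (Fin 5) ℝ
abbrev V3 := Fin 3 → ℝ
abbrev V9 := V3 × V3 × V3

/-- Skew-symmetric cross-product matrix `(ω)ₓ`. -/
def skew (ω : V3) : M3 := !![0, -ω 2, ω 1; ω 2, 0, -ω 0; -ω 1, ω 0, 0]

/-- 5×5 block matrix `[[A, v, x],[0₁ₓ₃, d, 0],[0₁ₓ₃, 0, e]]`. -/
def blk (A : M3) (v x : V3) (d e : ℝ) : M5 :=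
  !![A 0 0, A 0 1, A 0 2, v 0, x 0;
     A 1 0, A 1 1, A 1 2, v 1, x 1;
     A 2 0, A 2 1, A 2 2, v 2, x 2;
     0, 0, 0, d, 0;
     0, 0, 0, 0, e]

/-- Element of `SE₂(3)` built from rotation `R`, velocity `V`, position `X`. -/
def se23 (R : M3) (V X : V3) : M5 := blk R V X 1 1

/-- The hat map `ξ^∧` of `ξ = (ω, v, x) ∈ ℝ⁹`. -/
def hat (ω v x : V3) : M5 := blk (skew ω) v x 0 0

def hat9 (ξ : V9) : M5 := hat ξ.1 ξ.2.1 ξ.2.2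

def IsSO3 (R : M3) : Prop := Rᵀ * R = 1 ∧ R.det = 1

def IsSE23 (T : M5) : Prop := ∃ R V X, IsSO3 R ∧ T = se23 R V X

/-- Rotation block of a 5×5 matrix. -/
def Rof (T : M5) : M3 := Matrix.of fun i j => T (Fin.castLE (by omega) i) (Fin.castLE (by omega) j)

/-- Velocity column of a 5×5 matrix. -/
def Vof (T : M5) : V3 := fun i => T (Fin.castLE (by omega) i) 3

/-- Position column of a 5×5 matrix. -/
def Xof (T : M5) : V3 := fun i => T (Fin.castLE (by omega) i) 4

/-- Adjoint of `T ∈ SE₂(3)` acting on `ξ = (ω, v, x) ∈ ℝ⁹`: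
  `[[R, 0, 0],[(V)ₓR, R, 0],[(X)ₓR, 0, R]]`. -/
def Ad (T : M5) (ξ : V9) : V9 :=
  (Rof T *ᵥ ξ.1,
   (skew (Vof T) * Rof T) *ᵥ ξ.1 + Rof T *ᵥ ξ.2.1,
   (skew (Xof T) * Rof T) *ᵥ ξ.1 + Rof T *ᵥ ξ.2.2)

/-- `f(T)` : places the velocity column of `T` in the position column. -/
def fmap (T : M5) : M5 := blk 0 0 (Vof T) 0 0

/-- `Φ_t` : maps `[[R,V,X],...]` to `[[R,V,X+tV],...]` (acting on the top three rows). -/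
def Phi (t : ℝ) (T : M5) : M5 :=
  Matrix.of fun i j => if (i : ℕ) < 3 ∧ (j : ℕ) = 4 then T i j + t * T i 3 else T i j

/-- The linear map `F : (ω,v,x) ↦ (ω, v, x + Δt·v)`. -/
def Fmap (Δt : ℝ) (ξ : V9) : V9 := (ξ.1, ξ.2.1, ξ.2.2 + Δt • ξ.2.1)

/-!
On matrices whose last two rows are those of the identity, `Φ_Δt` is conjugation by the
transvection `D = transvection 3 4 Δt` (adding `Δt` times column 3 to column 4), and
`D⁻¹ ξ^∧ D = (F ξ)^∧`. Since `ξ^∧` has zero last rows, `exp_m (ξ^∧)` has the identity's last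
rows, so `Φ (T̄ exp_m ξ^∧) = Φ T̄ · Φ (exp_m ξ^∧) = Φ T̄ · exp_m ((F ξ)^∧)`. Finally, moving `Υ`
to the left of the exponential conjugates its argument, and `Υ⁻¹ η^∧ Υ = (Ad_{Υ⁻¹} η)^∧`
because `(R a)ₓ = R (a)ₓ Rᵀ` for `R ∈ SO(3)`.
-/

lemma blk_mul (A A' : M3) (v x v' x' : V3) (d e d' e' : ℝ) :
    blk A v x d e * blk A' v' x' d' e' =
      blk (A * A') (A *ᵥ v' + d' • v) (A *ᵥ x' + e' • x) (d * d') (e * e') := by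
  ext i j
  fin_cases i <;> fin_cases j <;>
    simp [blk, mul_apply, mulVec, dotProduct, Fin.sum_univ_five, Fin.sum_univ_three] <;> ring

lemma blk_one : blk 1 0 0 1 1 = 1 := by
  ext i j
  fin_cases i <;> fin_cases j <;> simp [blk, one_apply]

lemma blk_zero : blk 0 0 0 0 0 = 0 := by
  ext i j
  fin_cases i <;> fin_cases j <;> simp [blk]

lemma Phi_blk (t : ℝ) (A : M3) (v x : V3) (d e : ℝ) :
    Phi t (blk A v x d e) = blk A v (x + t • v) d e := by
  ext i j
  fin_cases i <;> fin_cases j <;> simp [Phi, blk]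

lemma Rof_blk (A : M3) (v x : V3) (d e : ℝ) : Rof (blk A v x d e) = A := by
  ext i j
  fin_cases i <;> fin_cases j <;> simp [Rof, blk, Fin.castLE]

lemma Vof_blk (A : M3) (v x : V3) (d e : ℝ) : Vof (blk A v x d e) = v := by
  ext i
  fin_cases i <;> simp [Vof, blk, Fin.castLE]

lemma Xof_blk (A : M3) (v x : V3) (d e : ℝ) : Xof (blk A v x d e) = x := by
  ext i
  fin_cases i <;> simp [Xof, blk, Fin.castLE]

lemma skew_mulVec (ω a : V3) : skew ω *ᵥ a = ω ⨯₃ a := by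
  ext i
  fin_cases i <;> simp [skew, cross_apply, mulVec, dotProduct, Fin.sum_univ_three] <;> ring

lemma skew_mulVec_mul (M : M3) (a : V3) : skew (M *ᵥ a) * M = (adjugate M)ᵀ * skew a := by
  rw [eta_fin_three M, adjugate_fin_three]
  ext i j
  fin_cases i <;> fin_cases j <;>
    simp [skew, mul_apply, mulVec, dotProduct, Fin.sum_univ_three] <;> ring

lemma IsSO3.mul_transpose {R : M3} (hR : IsSO3 R) : R * Rᵀ = 1 := mul_eq_one_comm.mp hR.1

lemma IsSO3.adjugate_eq {R : M3} (hR : IsSO3 R) : adjugate R = Rᵀ := by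
  calc adjugate R = adjugate R * R * Rᵀ := by rw [mul_assoc, hR.mul_transpose, mul_one]
    _ = Rᵀ := by rw [adjugate_mul, hR.2, one_smul, one_mul]

lemma IsSO3.transpose {R : M3} (hR : IsSO3 R) : IsSO3 Rᵀ :=
  ⟨by rw [transpose_transpose, hR.mul_transpose], by rw [det_transpose, hR.2]⟩

lemma IsSO3.skew_mulVec {R : M3} (hR : IsSO3 R) (a : V3) : skew (R *ᵥ a) = R * skew a * Rᵀ := by
  calc skew (R *ᵥ a) = skew (R *ᵥ a) * R * Rᵀ := by rw [mul_assoc, hR.mul_transpose, mul_one]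
    _ = R * skew a * Rᵀ := by rw [skew_mulVec_mul, hR.adjugate_eq, transpose_transpose]

lemma se23_mul (R R' : M3) (V X V' X' : V3) :
    se23 R V X * se23 R' V' X' = se23 (R * R') (R *ᵥ V' + V) (R *ᵥ X' + X) := by
  rw [se23, se23, se23, blk_mul, one_mul, one_smul, one_smul]

lemma se23_mul_se23_inv {R : M3} (hR : IsSO3 R) (V X : V3) :
    se23 R V X * se23 Rᵀ (-(Rᵀ *ᵥ V)) (-(Rᵀ *ᵥ X)) = 1 := by
  rw [se23_mul, hR.mul_transpose, mulVec_neg, mulVec_neg, mulVec_mulVec, mulVec_mulVec,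
    hR.mul_transpose, one_mulVec, one_mulVec, neg_add_cancel, neg_add_cancel, se23, blk_one]

lemma se23_inv {R : M3} (hR : IsSO3 R) (V X : V3) :
    (se23 R V X)⁻¹ = se23 Rᵀ (-(Rᵀ *ᵥ V)) (-(Rᵀ *ᵥ X)) :=
  inv_eq_right_inv (se23_mul_se23_inv hR V X)

lemma IsSE23.inv {T : M5} (hT : IsSE23 T) : IsSE23 T⁻¹ := by
  obtain ⟨R, V, X, hR, rfl⟩ := hT
  exact ⟨_, _, _, hR.transpose, se23_inv hR V X⟩

lemma IsSE23.isUnit_det {T : M5} (hT : IsSE23 T) : IsUnit T.det := by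
  obtain ⟨R, V, X, hR, rfl⟩ := hT
  exact isUnit_det_of_right_inverse (se23_mul_se23_inv hR V X)

lemma hat9_Ad {T : M5} (hT : IsSE23 T) (ζ : V9) : hat9 (Ad T ζ) = T * hat9 ζ * T⁻¹ := by
  obtain ⟨R, V, X, hR, rfl⟩ := hT
  obtain ⟨ω, v, x⟩ := ζ
  have hcross : ∀ a : V3, (skew a * R) *ᵥ ω = (R * skew ω) *ᵥ -(Rᵀ *ᵥ a) := by
    intro a
    rw [mulVec_neg, mulVec_mulVec, ← hR.skew_mulVec, ← mulVec_mulVec, skew_mulVec, skew_mulVec,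
      cross_anticomm]
  rw [se23_inv hR]
  simp only [Ad, se23, Rof_blk, Vof_blk, Xof_blk, hat9, hat, blk_mul, zero_smul, one_smul,
    add_zero, mul_zero, mul_one]
  rw [← hR.skew_mulVec, hcross, hcross, add_comm]

lemma Phi_se23 (t : ℝ) (R : M3) (V X : V3) : Phi t (se23 R V X) = se23 R V (X + t • V) :=
  Phi_blk t R V X 1 1

lemma Phi_se23_mul (t : ℝ) (R R' : M3) (V X V' X' : V3) :
    Phi t (se23 R V X * se23 R' V' X') = Phi t (se23 R V X) * Phi t (se23 R' V' X') := by
  rw [se23_mul, Phi_se23, Phi_se23, Phi_se23, se23_mul, mulVec_add, mulVec_smul]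
  congr 1
  module

lemma transvection_inv {n R : Type*} [Fintype n] [DecidableEq n] [CommRing R] {i j : n}
    (h : i ≠ j) (c : R) :
    (transvection i j c)⁻¹ = transvection i j (-c) :=
  inv_eq_left_inv <| by
    rw [transvection_mul_transvection_same _ _ h, neg_add_cancel, transvection_zero]

lemma transvection_conj_blk (t : ℝ) (A : M3) (v x : V3) (d : ℝ) :
    transvection 3 4 (-t) * blk A v x d d * transvection 3 4 t = blk A v (x + t • v) d d := by
  ext i j
  fin_cases i <;> fin_cases j <;>
    simp [transvection, blk, mul_apply, Fin.sum_univ_five, one_apply, single_apply] <;> ring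

lemma Phi_se23_eq_conj (t : ℝ) (R : M3) (V X : V3) :
    Phi t (se23 R V X) = (transvection 3 4 t)⁻¹ * se23 R V X * transvection 3 4 t := by
  rw [Phi_se23, transvection_inv (by decide), se23, se23, transvection_conj_blk]

lemma hat9_Fmap_eq_conj (t : ℝ) (ξ : V9) :
    hat9 (Fmap t ξ) = (transvection 3 4 t)⁻¹ * hat9 ξ * transvection 3 4 t := by
  rw [transvection_inv (by decide), hat9, hat9, hat, hat, transvection_conj_blk]
  rfl

lemma mul_exp_eq_self_of_mul_eq_zero (𝕂 : Type*) {𝔸 : Type*} [RCLike 𝕂] [NormedRing 𝔸]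
    [NormedAlgebra 𝕂 𝔸] [CompleteSpace 𝔸] {P A : 𝔸} (h : P * A = 0) :
    P * NormedSpace.exp A = P := by
  have hpow : ∀ n ≠ 0, P * A ^ n = 0 := by
    rintro (_ | n) hn
    · contradiction
    · rw [pow_succ', ← mul_assoc, h, zero_mul]
  rw [NormedSpace.exp_eq_tsum 𝕂, ← (NormedSpace.expSeries_summable' (𝕂 := 𝕂) A).tsum_mul_left,
    tsum_eq_single 0 fun n hn => by rw [mul_smul_comm, hpow n hn, smul_zero]]
  simp

/-- `lowerProj * M = lowerProj` says that the last two rows of `M` are those of `1`. -/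
def lowerProj : M5 := blk 0 0 0 1 1

lemma eq_se23_of_lowerProj_mul {M : M5} (hM : lowerProj * M = lowerProj) :
    M = se23 (Rof M) (Vof M) (Xof M) := by
  obtain ⟨h30, h31, h32, h33, h34⟩ : M 3 0 = 0 ∧ M 3 1 = 0 ∧ M 3 2 = 0 ∧ M 3 3 = 1 ∧ M 3 4 = 0 := by
    simpa [lowerProj, blk, funext_iff, vecMul, dotProduct, Fin.sum_univ_five, Fin.forall_fin_succ]
      using congrFun hM 3
  obtain ⟨h40, h41, h42, h43, h44⟩ : M 4 0 = 0 ∧ M 4 1 = 0 ∧ M 4 2 = 0 ∧ M 4 3 = 0 ∧ M 4 4 = 1 := by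
    simpa [lowerProj, blk, funext_iff, vecMul, dotProduct, Fin.sum_univ_five, Fin.forall_fin_succ]
      using congrFun hM 4
  ext i j
  fin_cases i <;> fin_cases j <;> simp [se23, blk, Rof, Vof, Xof, Fin.castLE, *]

lemma exists_exp_hat9_eq_se23 (ξ : V9) : ∃ R V X, NormedSpace.exp (hat9 ξ) = se23 R V X := by
  let : NormedRing M5 := Matrix.linftyOpNormedRing
  let : NormedAlgebra ℝ M5 := Matrix.linftyOpNormedAlgebra
  refine ⟨_, _, _, eq_se23_of_lowerProj_mul (mul_exp_eq_self_of_mul_eq_zero ℝ ?_)⟩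
  rw [lowerProj, hat9, hat, blk_mul]
  simp [blk_zero]

lemma exp_hat9_Fmap (t : ℝ) (ξ : V9) :
    NormedSpace.exp (hat9 (Fmap t ξ)) = Phi t (NormedSpace.exp (hat9 ξ)) := by
  obtain ⟨R, V, X, hE⟩ := exists_exp_hat9_eq_se23 ξ
  have hD : IsUnit (transvection (3 : Fin 5) 4 t).det := by
    rw [det_transvection_of_ne _ _ (by decide)]
    exact isUnit_one
  rw [hat9_Fmap_eq_conj, exp_conj' _ _ ((isUnit_iff_isUnit_det _).2 hD), hE, Phi_se23_eq_conj]

theorem stmt_13_general (Δt : ℝ) (Tbar Υ : M5) (hT : IsSE23 Tbar) (hΥ : IsSE23 Υ)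
    (Γ : M5) (ξ : V9) :
    Γ * Phi Δt (Tbar * NormedSpace.exp (hat9 ξ)) * Υ
      = (Γ * Phi Δt Tbar * Υ) * NormedSpace.exp (hat9 (Ad Υ⁻¹ (Fmap Δt ξ))) := by
  obtain ⟨R, V, X, -, rfl⟩ := hT
  have hΦ : Phi Δt (se23 R V X * NormedSpace.exp (hat9 ξ))
      = Phi Δt (se23 R V X) * NormedSpace.exp (hat9 (Fmap Δt ξ)) := by
    obtain ⟨R₁, V₁, X₁, hE⟩ := exists_exp_hat9_eq_se23 ξ
    rw [exp_hat9_Fmap, hE, Phi_se23_mul]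
  have hΥ_det := hΥ.isUnit_det
  rw [hat9_Ad hΥ.inv, nonsing_inv_nonsing_inv _ hΥ_det,
    exp_conj' _ _ ((isUnit_iff_isUnit_det _).2 hΥ_det), hΦ]
  simp only [mul_assoc, mul_nonsing_inv_cancel_left _ _ hΥ_det]

/-- extended pose error propagation:
`Γ Φ(Tbar exp_m(ξ^∧)) Υ = (Γ Φ(Tbar) Υ) exp_m((Ad_{Υ⁻¹} F ξ)^∧)`. -/
theorem stmt_13 (Δt : ℝ) (Tbar Υ : M5) (hT : IsSE23 Tbar) (hΥ : IsSE23 Υ)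
    (Γ : M5) (hΓ : IsUnit Γ) (ξ : V9) :
    Γ * Phi Δt (Tbar * NormedSpace.exp (hat9 ξ)) * Υ
      = (Γ * Phi Δt Tbar * Υ) * NormedSpace.exp (hat9 (Ad Υ⁻¹ (Fmap Δt ξ))) :=
  stmt_13_general Δt Tbar Υ hT hΥ Γ ξ
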